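/- arXiv:2508.11615 — 8 statements merged into one kernel-verified Lean document; each statement's English description precedes it below -/
import Mathlib

section
/- Let C be a category, I an object of C, and η a natural transformation from the constant functor at I to the identity functor of C (so η has components η_X : I ⟶ X with η_X ≫ f = η_Y for all f : X ⟶ Y). Then: (i) η_I is idempotent (η_I ≫ η_I = η_I); (ii) if η_I splits, i.e. there are p : I ⟶ S and i : S ⟶ I with i ≫ p = 𝟙_S and p ≫ i = η_I, then S is an initial object of C; (iii) conversely, if C has an initial object then η_I splits; (iv) in particular, I is initial if and only if η_I = 𝟙_I. -/
open CategoryTheory CategoryTheory.Limits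

/-- Given a natural transformation `η` from the constant functor at `I` to the identity
functor, `η_I` is idempotent; it splits iff `C` has an initial object, in which case the
splitting object is initial; and `I` is itself initial iff `η_I = 𝟙 I`. -/
theorem initiality_via_splitting {C : Type*} [Category C] (I : C)
    (η : (Functor.const C).obj I ⟶ 𝟭 C) :
    (η.app I ≫ η.app I = η.app I) ∧
    (∀ (S : C) (p : I ⟶ S) (i : S ⟶ I),
      i ≫ p = 𝟙 S → p ≫ i = η.app I → Nonempty (IsInitial S)) ∧
    (HasInitial C →
      ∃ (S : C) (p : I ⟶ S) (i : S ⟶ I), i ≫ p = 𝟙 S ∧ p ≫ i = η.app I) ∧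
    (Nonempty (IsInitial I) ↔ η.app I = 𝟙 I) := by
  have nat : ∀ {X Y : C} (f : X ⟶ Y), η.app X ≫ f = η.app Y := by
    intro X Y f
    have := η.naturality f
    simpa using this.symm
  have idem : η.app I ≫ η.app I = η.app I := nat (η.app I)
  have split : ∀ (S : C) (p : I ⟶ S) (i : S ⟶ I),
      i ≫ p = 𝟙 S → p ≫ i = η.app I → Nonempty (IsInitial S) := by
    intro S p i hip hpi
    refine ⟨IsInitial.ofUniqueHom (fun X => i ≫ η.app X) ?_⟩
    intro X f
    have h1 : η.app I ≫ p = η.app S := nat p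
    have h2 : η.app S ≫ f = η.app X := nat f
    have h3 : i ≫ η.app S = 𝟙 S := by
      rw [← h1, ← hpi]
      simp [reassoc_of% hip, hip]
    calc f = (i ≫ η.app S) ≫ f := by rw [h3, Category.id_comp]
      _ = i ≫ η.app X := by rw [Category.assoc, h2]
  refine ⟨idem, split, ?_, ?_⟩
  · intro h
    refine ⟨⊥_ C, η.app (⊥_ C), initial.to I, ?_, nat (initial.to I)⟩
    apply initial.hom_ext
  · constructor
    · rintro ⟨hI⟩
      exact hI.hom_ext _ _
    · intro h
      exact split I (η.app I) (𝟙 I) (by simpa using h) (by simp)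
end

section
/- Let D : J ⥤ M be a functor and c a cocone over D. Suppose given, for every cocone s over D, a morphism f(s) : c.pt ⟶ s.pt such that (i) for every cocone s and every object j of J, c.ι.app j ≫ f(s) = s.ι.app j, and (ii) for every cocone s and every morphism h : s.pt ⟶ X, f(s') = f(s) ≫ h, where s' is the cocone with apex X and legs s.ι.app j ≫ h. Then e := f(c) : c.pt ⟶ c.pt is idempotent; e splits if and only if D admits a colimit, and in that case, for any splitting p : c.pt ⟶ S, i : S ⟶ c.pt (with i ≫ p = 𝟙_S and p ≫ i = e), the cocone with apex S and legs c.ι.app j ≫ p is a colimit cocone. In particular, f(c) = 𝟙 if and only if c itself is a colimit cocone. -/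
open CategoryTheory CategoryTheory.Limits

private lemma extend_eq_of_legs {J M : Type*} [Category J] [Category M]
    {D : J ⥤ M} (c s : Cocone D) (h : c.pt ⟶ s.pt)
    (hh : ∀ j, c.ι.app j ≫ h = s.ι.app j) : c.extend h = s := by
  obtain ⟨pt, ι⟩ := s
  dsimp at h hh
  have key : c.extensions.app pt ⟨h⟩ = ι := by
    apply NatTrans.ext
    funext j
    simpa using hh j
  show ({ pt := pt, ι := c.extensions.app pt ⟨h⟩ } : Cocone D) = _
  rw [key]

/-- A naturally weak colimit: a cocone `c` over `D` together with choices of mediating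
morphisms `f s : c.pt ⟶ s.pt` that commute with the legs and are natural in the codomain.
Then `f c` is idempotent; it splits iff `D` admits a colimit, any splitting exhibits the
colimit, and `f c = 𝟙` iff `c` itself is a colimit cocone. -/
theorem colimit_from_splitting_idempotent {J M : Type*} [Category J] [Category M]
    (D : J ⥤ M) (c : Cocone D)
    (f : ∀ s : Cocone D, c.pt ⟶ s.pt)
    (hleg : ∀ (s : Cocone D) (j : J), c.ι.app j ≫ f s = s.ι.app j)
    (hnat : ∀ (s : Cocone D) {X : M} (h : s.pt ⟶ X), f (s.extend h) = f s ≫ h) :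
    (f c ≫ f c = f c) ∧
    ((∃ (S : M) (p : c.pt ⟶ S) (i : S ⟶ c.pt), i ≫ p = 𝟙 S ∧ p ≫ i = f c) ↔
      HasColimit D) ∧
    (∀ (S : M) (p : c.pt ⟶ S) (i : S ⟶ c.pt), i ≫ p = 𝟙 S → p ≫ i = f c →
      Nonempty (IsColimit (c.extend p))) ∧
    (f c = 𝟙 c.pt ↔ Nonempty (IsColimit c)) := by
  have key0 : ∀ (s : Cocone D) {X : M} (h : s.pt ⟶ X)
      (tι : D ⟶ (Functor.const J).obj X),
      (∀ j, s.ι.app j ≫ h = tι.app j) → f ⟨X, tι⟩ = f s ≫ h := by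
    intro s X h tι hh
    have e2 : tι = s.extensions.app X ⟨h⟩ := by
      apply NatTrans.ext
      funext j
      simpa using (hh j).symm
    subst e2
    exact hnat s h
  have key : ∀ (s t : Cocone D) (h : s.pt ⟶ t.pt),
      (∀ j, s.ι.app j ≫ h = t.ι.app j) → f t = f s ≫ h := by
    intro s t h hh
    obtain ⟨X, tι⟩ := t
    exact key0 s h tι hh
  have hidem : f c ≫ f c = f c := (key c c (f c) (hleg c)).symm
  have split_colim : ∀ (S : M) (p : c.pt ⟶ S) (i : S ⟶ c.pt), i ≫ p = 𝟙 S →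
      p ≫ i = f c → Nonempty (IsColimit (c.extend p)) := by
    intro S p i hip hpi
    refine ⟨⟨fun s => i ≫ f s, ?_, ?_⟩⟩
    · intro s j
      have h1 : c.ι.app j ≫ p ≫ i = c.ι.app j := by rw [hpi]; exact hleg c j
      show (c.ι.app j ≫ p) ≫ i ≫ f s = s.ι.app j
      rw [Category.assoc, reassoc_of% h1, hleg]
    · intro s m hm
      show m = i ≫ f s
      have hfs : f s = f c ≫ p ≫ m :=
        key c s (p ≫ m) (fun j => by simpa using hm j)
      rw [hfs, ← hpi]
      simp only [Category.assoc]
      rw [reassoc_of% hip, reassoc_of% hip]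
  refine ⟨hidem, ?_, split_colim, ?_⟩
  · constructor
    · rintro ⟨S, p, i, hip, hpi⟩
      obtain ⟨hc⟩ := split_colim S p i hip hpi
      exact HasColimit.mk ⟨_, hc⟩
    · intro h
      refine ⟨colimit D, f (colimit.cocone D), colimit.desc D c, ?_, ?_⟩
      · apply colimit.hom_ext
        intro j
        have h1 : colimit.ι D j ≫ colimit.desc D c = c.ι.app j := colimit.ι_desc c j
        rw [Category.comp_id, reassoc_of% h1, hleg]
        rfl
      · exact (key (colimit.cocone D) c (colimit.desc D c) (fun j => colimit.ι_desc c j)).symm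
  · constructor
    · intro hfc
      obtain ⟨hc⟩ := split_colim c.pt (𝟙 c.pt) (𝟙 c.pt) (by simp) (by simp [hfc])
      have e : c.extend (𝟙 c.pt) = c := extend_eq_of_legs c c _ (by simp)
      rw [e] at hc
      exact ⟨hc⟩
    · rintro ⟨hc⟩
      have h1 : f c = hc.desc c := hc.uniq c (f c) (hleg c)
      have h2 : 𝟙 c.pt = hc.desc c := hc.uniq c (𝟙 c.pt) (by simp)
      rw [h1, h2]
end

section
/- Let C be a monoidal category with unit 𝟙_C. Suppose η is a natural transformation from the constant functor at 𝟙_C to the identity functor of C, and suppose there is a morphism μ : 𝟙_C ⊗ 𝟙_C ⟶ 𝟙_C satisfying the right unit law (ρ_{𝟙_C}).inv ≫ (𝟙_C ◁ η_{𝟙_C}) ≫ μ = 𝟙_{𝟙_C}. Then 𝟙_C is an initial object of C. In particular, if the identity functor of C admits a unital magma structure, then 𝟙_C is initial. -/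
open CategoryTheory CategoryTheory.Limits CategoryTheory.MonoidalCategory

/-- If the monoidal unit carries a natural transformation `η : const 𝟙_C ⟶ 𝟭 C` and a
multiplication `μ : 𝟙_C ⊗ 𝟙_C ⟶ 𝟙_C` satisfying the right unit law, then the unit is
initial. In particular this holds when the identity functor admits a unital magma
structure. -/
theorem unit_initial_of_magma {C : Type*} [Category C] [MonoidalCategory C]
    (η : (Functor.const C).obj (𝟙_ C) ⟶ 𝟭 C)
    (μ : 𝟙_ C ⊗ 𝟙_ C ⟶ 𝟙_ C)
    (hμ : (ρ_ (𝟙_ C)).inv ≫ (𝟙_ C ◁ η.app (𝟙_ C)) ≫ μ = 𝟙 (𝟙_ C)) :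
    Nonempty (IsInitial (𝟙_ C)) := by
  -- abbreviate e := η.app (𝟙_ C)
  set e := η.app (𝟙_ C) with he
  -- e has a retraction r, by the right unit law and naturality of ρ
  have hsec : e ≫ (ρ_ (𝟙_ C)).inv ≫ μ = 𝟙 (𝟙_ C) := by
    have key : (ρ_ (𝟙_ C)).inv ≫ (𝟙_ C ◁ e) = e ≫ (ρ_ (𝟙_ C)).inv := by
      rw [← unitors_inv_equal]; exact (MonoidalCategory.leftUnitor_inv_naturality e).symm
    rw [← Category.assoc, ← key, Category.assoc]
    exact hμ
  -- e is idempotent by naturality of η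
  have hidem : e ≫ e = e := by
    have := η.naturality e
    simpa using this.symm
  -- hence e = 𝟙
  have he1 : e = 𝟙 (𝟙_ C) := by
    calc e = e ≫ 𝟙 (𝟙_ C) := (Category.comp_id _).symm
    _ = e ≫ e ≫ (ρ_ (𝟙_ C)).inv ≫ μ := by rw [hsec]
    _ = (e ≫ e) ≫ (ρ_ (𝟙_ C)).inv ≫ μ := by rw [Category.assoc]
    _ = e ≫ (ρ_ (𝟙_ C)).inv ≫ μ := by rw [hidem]
    _ = 𝟙 (𝟙_ C) := hsec
  refine ⟨IsInitial.ofUniqueHom (fun Y => η.app Y) fun Y m => ?_⟩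
  have hnat := η.naturality m
  simp only [Functor.const_obj_obj, Functor.const_obj_map, Functor.id_map,
    Category.id_comp] at hnat
  show m = η.app Y
  rw [hnat, ← he, he1, Category.id_comp]
end

section
/- Let C be a monoidal category whose unit 𝟙_C is an initial object, and suppose the identity functor of C admits a unital magma structure (μ, η). Then for all objects A, B, the endomorphism e_{A,B} := ((ρ_A).inv ⊗ (λ_B).inv) ≫ ((A ◁ η_B) ⊗ (η_A ▷ B)) ≫ μ_{A⊗B} : A ⊗ B ⟶ A ⊗ B is idempotent: e_{A,B} ≫ e_{A,B} = e_{A,B}. -/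
open CategoryTheory CategoryTheory.Limits CategoryTheory.MonoidalCategory

/-- A unital magma structure on the identity functor of a monoidal category: natural
families `μ_A : A ⊗ A ⟶ A` and `η_A : 𝟙_C ⟶ A` satisfying the two unit laws. -/
structure IdMagma (C : Type*) [Category C] [MonoidalCategory C] where
  μ : ∀ A : C, A ⊗ A ⟶ A
  η : ∀ A : C, 𝟙_ C ⟶ A
  μ_natural : ∀ {A B : C} (f : A ⟶ B), (f ⊗ₘ f) ≫ μ B = μ A ≫ f
  η_natural : ∀ {A B : C} (f : A ⟶ B), η A ≫ f = η B
  left_unit : ∀ A : C, (λ_ A).inv ≫ (η A ▷ A) ≫ μ A = 𝟙 A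
  right_unit : ∀ A : C, (ρ_ A).inv ≫ (A ◁ η A) ≫ μ A = 𝟙 A

/-!
Write `e = (f ⊗ g) ≫ μ` with `f = ρ⁻¹ ≫ (A ◁ η_B) : A ⟶ A ⊗ B` and
`g = λ⁻¹ ≫ (η_A ▷ B) : B ⟶ A ⊗ B`. Naturality of `μ` gives
`e ≫ e = ((f ≫ e) ⊗ (g ≫ e)) ≫ μ`, so it suffices that `f ≫ e = f` and `g ≫ e = g`.
For the first, naturality of `η` turns `η_B ≫ g` into `η_{A ⊗ B}`, so
`f ≫ e = ρ⁻¹ ≫ (f ⊗ η_{A ⊗ B}) ≫ μ`, which is `f` by the right unit law; symmetrically for `g`.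
-/

namespace IdMagma

variable {C : Type*} [Category C] [MonoidalCategory C] (m : IdMagma C)

theorem tensorHom_μ_comp {A B X Y : C} (f : A ⟶ X) (g : B ⟶ X) (h : X ⟶ Y) :
    ((f ⊗ₘ g) ≫ m.μ X) ≫ h = ((f ≫ h) ⊗ₘ (g ≫ h)) ≫ m.μ Y := by
  rw [Category.assoc, ← m.μ_natural, tensorHom_comp_tensorHom_assoc]

theorem rightUnitor_inv_tensorHom_η_μ {A X : C} (f : A ⟶ X) :
    (ρ_ A).inv ≫ (f ⊗ₘ m.η X) ≫ m.μ X = f := by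
  rw [MonoidalCategory.tensorHom_def, Category.assoc, ← rightUnitor_inv_naturality_assoc, m.right_unit,
    Category.comp_id]

theorem leftUnitor_inv_η_tensorHom_μ {A X : C} (f : A ⟶ X) :
    (λ_ A).inv ≫ (m.η X ⊗ₘ f) ≫ m.μ X = f := by
  rw [tensorHom_def', Category.assoc, ← leftUnitor_inv_naturality_assoc, m.left_unit,
    Category.comp_id]

theorem rightUnitor_inv_whiskerLeft_η_comp {A B X : C} (f : A ⟶ X) (g : B ⟶ X) :
    ((ρ_ A).inv ≫ (A ◁ m.η B)) ≫ (f ⊗ₘ g) ≫ m.μ X = f := by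
  rw [Category.assoc, whiskerLeft_comp_tensorHom_assoc, m.η_natural,
    m.rightUnitor_inv_tensorHom_η_μ]

theorem leftUnitor_inv_η_whiskerRight_comp {A B X : C} (f : A ⟶ X) (g : B ⟶ X) :
    ((λ_ B).inv ≫ (m.η A ▷ B)) ≫ (f ⊗ₘ g) ≫ m.μ X = g := by
  rw [Category.assoc, whiskerRight_comp_tensorHom_assoc, m.η_natural,
    m.leftUnitor_inv_η_tensorHom_μ]

end IdMagma

theorem canonical_endo_idempotent_general {C : Type*} [Category C] [MonoidalCategory C]
    (m : IdMagma C) (A B : C) :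
    (((ρ_ A).inv ⊗ₘ (λ_ B).inv) ≫ ((A ◁ m.η B) ⊗ₘ (m.η A ▷ B)) ≫ m.μ (A ⊗ B)) ≫
      (((ρ_ A).inv ⊗ₘ (λ_ B).inv) ≫ ((A ◁ m.η B) ⊗ₘ (m.η A ▷ B)) ≫ m.μ (A ⊗ B)) =
    ((ρ_ A).inv ⊗ₘ (λ_ B).inv) ≫ ((A ◁ m.η B) ⊗ₘ (m.η A ▷ B)) ≫ m.μ (A ⊗ B) := by
  rw [← Category.assoc ((ρ_ A).inv ⊗ₘ _), tensorHom_comp_tensorHom, m.tensorHom_μ_comp,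
    m.rightUnitor_inv_whiskerLeft_η_comp, m.leftUnitor_inv_η_whiskerRight_comp]

/-- In a monoidal category with initial unit whose identity functor carries a unital
magma structure, the canonical endomorphism of `A ⊗ B` is idempotent. -/
theorem canonical_endo_idempotent {C : Type*} [Category C] [MonoidalCategory C]
    (hI : IsInitial (𝟙_ C)) (m : IdMagma C) (A B : C) :
    (((ρ_ A).inv ⊗ₘ (λ_ B).inv) ≫ ((A ◁ m.η B) ⊗ₘ (m.η A ▷ B)) ≫ m.μ (A ⊗ B)) ≫
      (((ρ_ A).inv ⊗ₘ (λ_ B).inv) ≫ ((A ◁ m.η B) ⊗ₘ (m.η A ▷ B)) ≫ m.μ (A ⊗ B)) =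
    ((ρ_ A).inv ⊗ₘ (λ_ B).inv) ≫ ((A ◁ m.η B) ⊗ₘ (m.η A ▷ B)) ≫ m.μ (A ⊗ B) :=
  canonical_endo_idempotent_general m A B
end

section
/- Let C be a monoidal category whose unit 𝟙_C is an initial object, and suppose the identity functor of C admits a unital magma structure (μ, η). Fix objects A, B, set ι₁ := (ρ_A).inv ≫ (A ◁ η_B) : A ⟶ A ⊗ B, ι₂ := (λ_B).inv ≫ (η_A ▷ B) : B ⟶ A ⊗ B, and let e_{A,B} := ((ρ_A).inv ⊗ (λ_B).inv) ≫ ((A ◁ η_B) ⊗ (η_A ▷ B)) ≫ μ_{A⊗B}. Then the idempotent e_{A,B} splits if and only if the binary coproduct of A and B exists in C; moreover, for any splitting p : A ⊗ B ⟶ S, i : S ⟶ A ⊗ B (with i ≫ p = 𝟙_S and p ≫ i = e_{A,B}), the cospan A —(ι₁ ≫ p)→ S ←(ι₂ ≫ p)— B is a binary coproduct of A and B. -/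
open CategoryTheory CategoryTheory.Limits CategoryTheory.MonoidalCategory

/-!
Write `inl := (ρ_A)⁻¹ ≫ A ◁ η_B` and `inr := (λ_B)⁻¹ ≫ η_A ▷ B`, and for `f : A ⟶ T`,
`g : B ⟶ T` put `copair f g := (f ⊗ g) ≫ μ_T`. Naturality of `η` and the unit laws give
`inl ≫ copair f g = f` and `inr ≫ copair f g = g`, so `A ⊗ B` is a weak coproduct, and naturality
of `μ` gives `copair f g ≫ k = copair (f ≫ k) (g ≫ k)`. The idempotent is `e = copair inl inr`,
hence `e ≫ k = copair (inl ≫ k) (inr ≫ k)`: a map out of `A ⊗ B` that is fixed by `e` is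
determined by its restrictions along `inl` and `inr`. So the image of `e` is the coproduct.
-/

namespace IdMagma

universe v u

variable {C : Type u} [Category.{v} C] [MonoidalCategory C] (m : IdMagma C)

def inl (A B : C) : A ⟶ A ⊗ B := (ρ_ A).inv ≫ (A ◁ m.η B)

def inr (A B : C) : B ⟶ A ⊗ B := (λ_ B).inv ≫ (m.η A ▷ B)

def copair {A B T : C} (f : A ⟶ T) (g : B ⟶ T) : A ⊗ B ⟶ T := (f ⊗ₘ g) ≫ m.μ T

@[simp]
lemma inl_copair {A B T : C} (f : A ⟶ T) (g : B ⟶ T) : m.inl A B ≫ m.copair f g = f := by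
  have : (A ◁ m.η B) ≫ (f ⊗ₘ g) = (f ▷ 𝟙_ C) ≫ (T ◁ m.η T) := by
    rw [← id_tensorHom, tensorHom_comp_tensorHom, Category.id_comp, m.η_natural,
      MonoidalCategory.tensorHom_def]
  rw [inl, copair, Category.assoc, reassoc_of% this, ← rightUnitor_inv_naturality_assoc,
    m.right_unit, Category.comp_id]

@[simp]
lemma inr_copair {A B T : C} (f : A ⟶ T) (g : B ⟶ T) : m.inr A B ≫ m.copair f g = g := by
  have : (m.η A ▷ B) ≫ (f ⊗ₘ g) = (𝟙_ C ◁ g) ≫ (m.η T ▷ T) := by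
    rw [← tensorHom_id, tensorHom_comp_tensorHom, Category.id_comp, m.η_natural,
      MonoidalCategory.tensorHom_def']
  rw [inr, copair, Category.assoc, reassoc_of% this, ← leftUnitor_inv_naturality_assoc,
    m.left_unit, Category.comp_id]

lemma copair_comp {A B T T' : C} (f : A ⟶ T) (g : B ⟶ T) (k : T ⟶ T') :
    m.copair f g ≫ k = m.copair (f ≫ k) (g ≫ k) := by
  rw [copair, copair, Category.assoc, ← m.μ_natural, tensorHom_comp_tensorHom_assoc]

lemma idem_eq (A B : C) :
    ((ρ_ A).inv ⊗ₘ (λ_ B).inv) ≫ ((A ◁ m.η B) ⊗ₘ (m.η A ▷ B)) ≫ m.μ (A ⊗ B) =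
      m.copair (m.inl A B) (m.inr A B) := by
  rw [copair, inl, inr, tensorHom_comp_tensorHom_assoc]

noncomputable def isColimitOfSplitting {A B S : C} {p : A ⊗ B ⟶ S} {i : S ⟶ A ⊗ B}
    (hip : i ≫ p = 𝟙 S) (hpi : p ≫ i = m.copair (m.inl A B) (m.inr A B)) :
    IsColimit (BinaryCofan.mk (m.inl A B ≫ p) (m.inr A B ≫ p)) :=
  BinaryCofan.IsColimit.mk _ (fun f g => i ≫ m.copair f g)
    (fun f g => show (m.inl A B ≫ p) ≫ i ≫ m.copair f g = f by
      rw [Category.assoc, reassoc_of% hpi, ← Category.assoc, inl_copair, inl_copair])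
    (fun f g => show (m.inr A B ≫ p) ≫ i ≫ m.copair f g = g by
      rw [Category.assoc, reassoc_of% hpi, ← Category.assoc, inr_copair, inr_copair])
    (fun f g (k : S ⟶ _) (hk₁ : (m.inl A B ≫ p) ≫ k = f) (hk₂ : (m.inr A B ≫ p) ≫ k = g) => by
      have hpk : p ≫ k = m.copair f g := by
        rw [← hk₁, ← hk₂, Category.assoc, Category.assoc, ← copair_comp, ← hpi,
          Category.assoc, reassoc_of% hip]
      show k = i ≫ m.copair f g
      rw [← hpk, reassoc_of% hip])

lemma exists_splitting_of_hasBinaryCoproduct (A B : C) [HasBinaryCoproduct A B] :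
    ∃ (p : A ⊗ B ⟶ A ⨿ B) (i : A ⨿ B ⟶ A ⊗ B),
      i ≫ p = 𝟙 _ ∧ p ≫ i = m.copair (m.inl A B) (m.inr A B) :=
  ⟨m.copair coprod.inl coprod.inr, coprod.desc (m.inl A B) (m.inr A B),
    coprod.hom_ext (by simp) (by simp), by rw [copair_comp, coprod.inl_desc, coprod.inr_desc]⟩

end IdMagma

theorem coproducts_via_splitting_general {C : Type*} [Category C] [MonoidalCategory C]
    (m : IdMagma C) (A B : C) :
    ((∃ (S : C) (p : A ⊗ B ⟶ S) (i : S ⟶ A ⊗ B),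
        i ≫ p = 𝟙 S ∧
        p ≫ i = ((ρ_ A).inv ⊗ₘ (λ_ B).inv) ≫ ((A ◁ m.η B) ⊗ₘ (m.η A ▷ B)) ≫ m.μ (A ⊗ B)) ↔
      HasBinaryCoproduct A B) ∧
    (∀ (S : C) (p : A ⊗ B ⟶ S) (i : S ⟶ A ⊗ B),
      i ≫ p = 𝟙 S →
      p ≫ i = ((ρ_ A).inv ⊗ₘ (λ_ B).inv) ≫ ((A ◁ m.η B) ⊗ₘ (m.η A ▷ B)) ≫ m.μ (A ⊗ B) →
      Nonempty (IsColimit (BinaryCofan.mk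
        (((ρ_ A).inv ≫ (A ◁ m.η B)) ≫ p) (((λ_ B).inv ≫ (m.η A ▷ B)) ≫ p)))) := by
  simp only [m.idem_eq]
  refine ⟨⟨fun ⟨S, p, i, hip, hpi⟩ => ⟨_, m.isColimitOfSplitting hip hpi⟩, fun _ => ?_⟩,
    fun S p i hip hpi => ⟨m.isColimitOfSplitting hip hpi⟩⟩
  exact ⟨_, m.exists_splitting_of_hasBinaryCoproduct A B⟩

/-- In a monoidal category with initial unit and a unital magma structure on the identity
functor, the canonical idempotent on `A ⊗ B` splits iff the binary coproduct of `A` and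
`B` exists, and any splitting exhibits the binary coproduct via the canonical
coprojections. -/
theorem coproducts_via_splitting {C : Type*} [Category C] [MonoidalCategory C]
    (hI : IsInitial (𝟙_ C)) (m : IdMagma C) (A B : C) :
    ((∃ (S : C) (p : A ⊗ B ⟶ S) (i : S ⟶ A ⊗ B),
        i ≫ p = 𝟙 S ∧
        p ≫ i = ((ρ_ A).inv ⊗ₘ (λ_ B).inv) ≫ ((A ◁ m.η B) ⊗ₘ (m.η A ▷ B)) ≫ m.μ (A ⊗ B)) ↔
      HasBinaryCoproduct A B) ∧
    (∀ (S : C) (p : A ⊗ B ⟶ S) (i : S ⟶ A ⊗ B),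
      i ≫ p = 𝟙 S →
      p ≫ i = ((ρ_ A).inv ⊗ₘ (λ_ B).inv) ≫ ((A ◁ m.η B) ⊗ₘ (m.η A ▷ B)) ≫ m.μ (A ⊗ B) →
      Nonempty (IsColimit (BinaryCofan.mk
        (((ρ_ A).inv ≫ (A ◁ m.η B)) ≫ p) (((λ_ B).inv ≫ (m.η A ▷ B)) ≫ p)))) :=
  coproducts_via_splitting_general m A B
end

section
/- Let C be a monoidal category such that the tensor product functor ⊗ : C × C ⥤ C (sending a pair of objects (A, B) to A ⊗ B and a pair of morphisms (f, g) to f ⊗ g) admits a right adjoint. Then the unit object 𝟙_C is an initial object of C. -/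
/-!
With `⊗ ⊣ R`, a morphism `𝟙 ⊗ 𝟙 ⟶ X` is the same as a pair of
morphisms `𝟙 ⟶ (R X).1` and `𝟙 ⟶ (R X).2`. For `f : 𝟙 ⟶ X`, the morphism `λ ≫ f` factors both
as `(𝟙 ⊗ f) ≫ λ_X` and as `(f ⊗ 𝟙) ≫ ρ_X`; by naturality of the adjunction, the first
factorisation pins down the first component of its transpose and the second one the second
component, independently of `f`. Hence there is at most one morphism `𝟙 ⟶ X`, and transposing the
pair of these components back gives one.
-/

open CategoryTheory CategoryTheory.Limits CategoryTheory.MonoidalCategory CategoryTheory.Prod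

namespace CategoryTheory.Adjunction

variable {C D E : Type*} [Category C] [Category D] [Category E] {F : C × D ⥤ E} {G : E ⥤ C × D}
  (adj : F ⊣ G)

lemma homEquiv_map_id_prod_comp_fst {A : C} {B B' : D} (g : B ⟶ B') {X : E}
    (u : F.obj (A, B') ⟶ X) :
    (adj.homEquiv (A, B) X (F.map (𝟙 A ×ₘ g) ≫ u)).1 = (adj.homEquiv (A, B') X u).1 := by
  rw [adj.homEquiv_naturality_left]
  exact Category.id_comp _

lemma homEquiv_map_prod_id_comp_snd {A A' : C} {B : D} (g : A ⟶ A') {X : E}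
    (u : F.obj (A', B) ⟶ X) :
    (adj.homEquiv (A, B) X (F.map (g ×ₘ 𝟙 B) ≫ u)).2 = (adj.homEquiv (A', B) X u).2 := by
  rw [adj.homEquiv_naturality_left]
  exact Category.id_comp _

end CategoryTheory.Adjunction

namespace CategoryTheory.MonoidalCategory

variable {C : Type*} [Category C] [MonoidalCategory C] {G : C ⥤ C × C}

lemma subsingleton_hom_unit_of_tensor_adjunction (adj : tensor C ⊣ G) (X : C) :
    Subsingleton (𝟙_ C ⟶ X) := by
  refine ⟨fun f f' =>
    (cancel_epi (λ_ (𝟙_ C)).hom).1 ((adj.homEquiv (𝟙_ C, 𝟙_ C) X).injective ?_)⟩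
  have factor_left (f : 𝟙_ C ⟶ X) :
      (λ_ (𝟙_ C)).hom ≫ f = (tensor C).map (𝟙 (𝟙_ C) ×ₘ f) ≫ (λ_ X).hom := by
    simp
  have factor_right (f : 𝟙_ C ⟶ X) :
      (λ_ (𝟙_ C)).hom ≫ f = (tensor C).map (f ×ₘ 𝟙 (𝟙_ C)) ≫ (ρ_ X).hom := by
    simp [unitors_equal]
  ext
  · rw [factor_left, factor_left, adj.homEquiv_map_id_prod_comp_fst,
      adj.homEquiv_map_id_prod_comp_fst]
  · rw [factor_right, factor_right, adj.homEquiv_map_prod_id_comp_snd,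
      adj.homEquiv_map_prod_id_comp_snd]

def homFromUnitOfTensorAdjunction (adj : tensor C ⊣ G) (X : C) : 𝟙_ C ⟶ X :=
  (λ_ (𝟙_ C)).inv ≫ (adj.homEquiv (𝟙_ C, 𝟙_ C) X).symm
    ((adj.homEquiv (𝟙_ C, X) X (λ_ X).hom).1 ×ₘ (adj.homEquiv (X, 𝟙_ C) X (ρ_ X).hom).2)

end CategoryTheory.MonoidalCategory

/-- If the tensor product functor `C × C ⥤ C` of a monoidal category admits a right
adjoint, then the monoidal unit is an initial object. -/
theorem unit_initial_of_tensor_isLeftAdjoint {C : Type*} [Category C] [MonoidalCategory C]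
    [(MonoidalCategory.tensor C).IsLeftAdjoint] :
    Nonempty (IsInitial (𝟙_ C)) := by
  let adj := Adjunction.ofIsLeftAdjoint (tensor C)
  have := subsingleton_hom_unit_of_tensor_adjunction adj
  exact ⟨IsInitial.ofUniqueHom (homFromUnitOfTensorAdjunction adj) fun _ _ => Subsingleton.elim _ _⟩
end

section
/- Main theorem, (e) ⇒ (a): Let C be a monoidal category such that the tensor product functor ⊗ : C × C ⥤ C admits a right adjoint. Then C is cocartesian: 𝟙_C is an initial object, and for all objects A, B the cospan A —ι₁→ A ⊗ B ←ι₂— B, with ι₁ := (ρ_A).inv ≫ (A ◁ ![B]) and ι₂ := (λ_B).inv ≫ (![A] ▷ B), where ![X] : 𝟙_C ⟶ X is the unique morphism from the initial unit, is a binary coproduct of A and B; in particular C has all finite coproducts. -/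
/-!
Write `G = (G₁, G₂)` for the right adjoint, so that maps `A ⊗ B ⟶ X` correspond to pairs
`(A ⟶ G₁ X, B ⟶ G₂ X)`, naturally in `A` and `B`. For `w : 𝟙_ C ⟶ X` the unitor naturalities
`λ_𝟙 ≫ w = (𝟙 ◁ w) ≫ λ_X` and `ρ_𝟙 ≫ w = (w ▷ 𝟙) ≫ ρ_X`, with `λ_𝟙 = ρ_𝟙`, show that the
transpose of `λ_𝟙 ≫ w` has the first component of the transpose of `λ_X` and the second of that
of `ρ_X`. It does not depend on `w`, so `𝟙_ C` is initial. Consequently a map out of `A ⊗ 𝟙` is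
determined by the first component of its transpose and a map out of `𝟙 ⊗ B` by the second, and
`f : A ⟶ X`, `g : B ⟶ X` extend uniquely along the canonical cospan: the extension is the map
`A ⊗ B ⟶ X` whose transpose pairs the first component of the transpose of `ρ_A ≫ f` with the
second component of that of `λ_B ≫ g`.
-/

open CategoryTheory CategoryTheory.Limits CategoryTheory.MonoidalCategory

namespace CategoryTheory.Adjunction

variable {C : Type*} [Category C] [MonoidalCategory C] {G : C ⥤ C × C}

theorem homEquiv_tensorHom_comp (adj : tensor C ⊣ G) {A A' B B' X : C} (f : A' ⟶ A)
    (g : B' ⟶ B) (h : A ⊗ B ⟶ X) :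
    adj.homEquiv (A', B') X ((f ⊗ₘ g) ≫ h) =
      (f ≫ (adj.homEquiv (A, B) X h).1, g ≫ (adj.homEquiv (A, B) X h).2) :=
  adj.homEquiv_naturality_left (X := (A, B)) (X' := (A', B')) (f, g) h

theorem homEquiv_whiskerLeft_comp (adj : tensor C ⊣ G) {A B B' X : C} (g : B' ⟶ B)
    (h : A ⊗ B ⟶ X) :
    adj.homEquiv (A, B') X ((A ◁ g) ≫ h) =
      ((adj.homEquiv (A, B) X h).1, g ≫ (adj.homEquiv (A, B) X h).2) := by
  simpa using adj.homEquiv_tensorHom_comp (𝟙 A) g h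

theorem homEquiv_whiskerRight_comp (adj : tensor C ⊣ G) {A A' B X : C} (f : A' ⟶ A)
    (h : A ⊗ B ⟶ X) :
    adj.homEquiv (A', B) X ((f ▷ B) ≫ h) =
      (f ≫ (adj.homEquiv (A, B) X h).1, (adj.homEquiv (A, B) X h).2) := by
  simpa using adj.homEquiv_tensorHom_comp f (𝟙 B) h

theorem homEquiv_leftUnitor_comp (adj : tensor C ⊣ G) (X : C) (w : 𝟙_ C ⟶ X) :
    adj.homEquiv (𝟙_ C, 𝟙_ C) X ((λ_ (𝟙_ C)).hom ≫ w) =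
      ((adj.homEquiv (𝟙_ C, X) X (λ_ X).hom).1, (adj.homEquiv (X, 𝟙_ C) X (ρ_ X).hom).2) := by
  ext
  · rw [← leftUnitor_naturality, adj.homEquiv_whiskerLeft_comp]
  · rw [unitors_equal, ← rightUnitor_naturality, adj.homEquiv_whiskerRight_comp]

theorem subsingleton_hom_tensorUnit (adj : tensor C ⊣ G) (X : C) : Subsingleton (𝟙_ C ⟶ X) where
  allEq u v := (cancel_epi (λ_ (𝟙_ C)).hom).mp <| (adj.homEquiv _ X).injective <|
    (adj.homEquiv_leftUnitor_comp X u).trans (adj.homEquiv_leftUnitor_comp X v).symm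

def isInitialTensorUnit (adj : tensor C ⊣ G) : IsInitial (𝟙_ C) :=
  IsInitial.ofUniqueHom
    (fun X => (λ_ (𝟙_ C)).inv ≫ (adj.homEquiv (𝟙_ C, 𝟙_ C) X).symm
      ⟨(adj.homEquiv (𝟙_ C, X) X (λ_ X).hom).1, (adj.homEquiv (X, 𝟙_ C) X (ρ_ X).hom).2⟩)
    (fun X _ => (adj.subsingleton_hom_tensorUnit X).elim _ _)

theorem whiskerLeft_comp_homEquiv_symm (adj : tensor C ⊣ G) {A B X : C} (t : 𝟙_ C ⟶ B)
    (f : A ⊗ 𝟙_ C ⟶ X) (b : B ⟶ (G.obj X).2) :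
    (A ◁ t) ≫ (adj.homEquiv (A, B) X).symm ((adj.homEquiv (A, 𝟙_ C) X f).1, b) = f := by
  apply (adj.homEquiv (A, 𝟙_ C) X).injective
  rw [adj.homEquiv_whiskerLeft_comp, Equiv.apply_symm_apply]
  exact Prod.ext rfl ((adj.subsingleton_hom_tensorUnit _).elim _ _)

theorem whiskerRight_comp_homEquiv_symm (adj : tensor C ⊣ G) {A B X : C} (t : 𝟙_ C ⟶ A)
    (f : 𝟙_ C ⊗ B ⟶ X) (a : A ⟶ (G.obj X).1) :
    (t ▷ B) ≫ (adj.homEquiv (A, B) X).symm (a, (adj.homEquiv (𝟙_ C, B) X f).2) = f := by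
  apply (adj.homEquiv (𝟙_ C, B) X).injective
  rw [adj.homEquiv_whiskerRight_comp, Equiv.apply_symm_apply]
  exact Prod.ext ((adj.subsingleton_hom_tensorUnit _).elim _ _) rfl

def isColimitBinaryCofan (adj : tensor C ⊣ G) (hI : IsInitial (𝟙_ C)) (A B : C) :
    IsColimit (BinaryCofan.mk ((ρ_ A).inv ≫ (A ◁ hI.to B)) ((λ_ B).inv ≫ (hI.to A ▷ B))) :=
  BinaryCofan.isColimitMk
    (fun s => (adj.homEquiv (A, B) s.pt).symm
      ((adj.homEquiv (A, 𝟙_ C) s.pt ((ρ_ A).hom ≫ s.inl)).1,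
        (adj.homEquiv (𝟙_ C, B) s.pt ((λ_ B).hom ≫ s.inr)).2))
    (fun _ => (Category.assoc _ _ _).trans
      ((Iso.inv_comp_eq _).mpr (adj.whiskerLeft_comp_homEquiv_symm _ _ _)))
    (fun _ => (Category.assoc _ _ _).trans
      ((Iso.inv_comp_eq _).mpr (adj.whiskerRight_comp_homEquiv_symm _ _ _)))
    (fun _ m hl hr => by
      rw [Equiv.eq_symm_apply, ← hl, ← hr]
      simp only [Category.assoc, Iso.hom_inv_id_assoc, adj.homEquiv_whiskerLeft_comp,
        adj.homEquiv_whiskerRight_comp]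
      rfl)

end CategoryTheory.Adjunction

/-- Main theorem, (e) ⇒ (a): if the tensor product functor `C × C ⥤ C` of a monoidal
category admits a right adjoint, then `C` is cocartesian: the unit is initial, the
canonical cospans are binary coproducts, and `C` has all finite coproducts. -/
theorem cocartesian_of_tensor_isLeftAdjoint {C : Type*} [Category C] [MonoidalCategory C]
    [(MonoidalCategory.tensor C).IsLeftAdjoint] :
    ∃ hI : IsInitial (𝟙_ C),
      (∀ A B : C, Nonempty (IsColimit (BinaryCofan.mk
        ((ρ_ A).inv ≫ (A ◁ hI.to B)) ((λ_ B).inv ≫ (hI.to A ▷ B))))) ∧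
      HasFiniteCoproducts C := by
  let adj := Adjunction.ofIsLeftAdjoint (tensor C)
  let hI := adj.isInitialTensorUnit
  refine ⟨hI, fun A B => ⟨adj.isColimitBinaryCofan hI A B⟩, ?_⟩
  have : HasInitial C := hI.hasInitial
  have : ∀ {A B : C}, HasColimit (pair A B) := ⟨_, adj.isColimitBinaryCofan hI _ _⟩
  have : HasBinaryCoproducts C := hasBinaryCoproducts_of_hasColimit_pair C
  exact hasFiniteCoproducts_of_has_binary_and_initial
end

section
/- Let C be a cartesian monoidal category, i.e. a category with finite products regarded as a monoidal category with tensor the binary product A ⨯ B and unit the terminal object ⊤. Then the product functor C × C ⥤ C, (A, B) ↦ A ⨯ B, admits a right adjoint if and only if C has finite biproducts in the following sense: the terminal object ⊤ is initial, and for all objects A, B the binary product A ⨯ B, equipped with the coprojections j₁ := ⟨𝟙_A, !_A ≫ ¡_B⟩ : A ⟶ A ⨯ B and j₂ := ⟨!_B ≫ ¡_A, 𝟙_B⟩ : B ⟶ A ⨯ B (where !_X : X ⟶ ⊤ is the terminal map and ¡_X : ⊤ ⟶ X is the unique map from the initial object ⊤, and ⟨f, g⟩ denotes the pairing into the product), is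 a binary coproduct of A and B. -/
/-!
Write `G = (G₁, G₂)` for a right adjoint of the product functor, so that maps `A ⨯ B ⟶ X`
correspond naturally to pairs `(A ⟶ G₁ X, B ⟶ G₂ X)`. Every map `⊤ ⨯ B ⟶ X` factors through the
projection `⊤ ⨯ X ⟶ X`, so by naturality all maps `⊤ ⟶ G₁ X` coincide, and likewise all maps
`⊤ ⟶ G₂ X`. Hence `⊤ ⟶ X ≃ (⊤ ⨯ ⊤ ⟶ X)` is a singleton, i.e. `⊤` is initial, and
`(A ⟶ X) ≃ (A ⨯ ⊤ ⟶ X) ≃ (A ⟶ G₁ X)`. Under these identifications precomposition with the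
coprojections `A ⟶ A ⨯ B ⟵ B` becomes the adjunction bijection, so `A ⨯ B` is a coproduct.
Conversely, if it is, the bijections `(A ⨯ B ⟶ X) ≃ (A ⟶ X) × (B ⟶ X)` make the diagonal
right adjoint to the product functor.
-/

open CategoryTheory CategoryTheory.Limits CategoryTheory.MonoidalCategory

attribute [local instance] CategoryTheory.CartesianMonoidalCategory.ofHasFiniteProducts

namespace CategoryTheory.Limits.BinaryCofan

variable {C : Type*} [Category C] {X Y : C}

theorem nonempty_isColimit_iff_bijective (c : BinaryCofan X Y) :
    Nonempty (IsColimit c) ↔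
      ∀ T : C, Function.Bijective fun m : c.pt ⟶ T => (c.inl ≫ m, c.inr ≫ m) := by
  constructor
  · rintro ⟨hc⟩ T
    refine ⟨fun m m' h => IsColimit.hom_ext hc (congrArg (·.1) h) (congrArg (·.2) h),
      fun ⟨f, g⟩ => ⟨hc.desc (mk f g), ?_⟩⟩
    exact Prod.ext (hc.fac (mk f g) ⟨.left⟩) (hc.fac (mk f g) ⟨.right⟩)
  · intro h
    let hom T := Equiv.ofBijective _ (h T)
    refine ⟨IsColimit.mk _ (fun f g => (hom _).symm (f, g)) (fun f g => ?_) (fun f g => ?_)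
      (fun f g m hf hg => (hom _).eq_symm_apply.mpr (Prod.ext hf hg))⟩
    exacts [congrArg (·.1) ((hom _).apply_symm_apply (f, g)),
      congrArg (·.2) ((hom _).apply_symm_apply (f, g))]

end CategoryTheory.Limits.BinaryCofan

section

variable {C : Type*} [Category C] [HasFiniteProducts C]

theorem tensor_map_eq_prod_map {P Q : C × C} (u : P ⟶ Q) :
    (tensor C).map u = prod.map u.1 u.2 := by
  apply prod.hom_ext
  · exact (BinaryFan.IsLimit.lift' _ _ _).2.1.trans (prod.map_fst u.1 u.2).symm
  · exact (BinaryFan.IsLimit.lift' _ _ _).2.2.trans (prod.map_snd u.1 u.2).symm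

namespace CategoryTheory.Limits.IsInitial

variable (hI : IsInitial (⊤_ C))

noncomputable abbrev prodInl (A B : C) : A ⟶ A ⨯ B := prod.lift (𝟙 A) (terminal.from A ≫ hI.to B)

noncomputable abbrev prodInr (A B : C) : B ⟶ A ⨯ B := prod.lift (terminal.from B ≫ hI.to A) (𝟙 B)

theorem fst_comp_prodInl (A B : C) :
    (prod.fst : A ⨯ ⊤_ C ⟶ A) ≫ hI.prodInl A B = prod.map (𝟙 A) (hI.to B) := by
  apply prod.hom_ext
  · simp [prod.lift_fst]
  · simp only [prod.comp_lift, terminal.comp_from_assoc, prod.lift_snd, prod.map_snd]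
    exact congrArg (· ≫ hI.to B) (terminal.hom_ext _ _)

theorem snd_comp_prodInr (A B : C) :
    (prod.snd : (⊤_ C) ⨯ B ⟶ B) ≫ hI.prodInr A B = prod.map (hI.to A) (𝟙 B) := by
  apply prod.hom_ext
  · simp only [prod.comp_lift, terminal.comp_from_assoc, prod.lift_fst, prod.map_fst]
    exact congrArg (· ≫ hI.to A) (terminal.hom_ext _ _)
  · simp [prod.lift_snd]

theorem prodInl_comp_prod_map {A B A' B' : C} (u : A' ⟶ A) (v : B' ⟶ B) :
    hI.prodInl A' B' ≫ prod.map u v = u ≫ hI.prodInl A B := by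
  apply prod.hom_ext
  · simp [prod.lift_fst]
  · simp [prod.lift_snd]

theorem prodInr_comp_prod_map {A B A' B' : C} (u : A' ⟶ A) (v : B' ⟶ B) :
    hI.prodInr A' B' ≫ prod.map u v = v ≫ hI.prodInr A B := by
  apply prod.hom_ext
  · simp [prod.lift_fst]
  · simp [prod.lift_snd]

variable (h : ∀ A B T : C, Function.Bijective fun m : A ⨯ B ⟶ T =>
  (hI.prodInl A B ≫ m, hI.prodInr A B ≫ m))

theorem prod_map_comp_ofBijective_symm {A B A' B' X : C} (u : A' ⟶ A) (v : B' ⟶ B)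
    (p : (A ⟶ X) × (B ⟶ X)) :
    prod.map u v ≫ (Equiv.ofBijective _ (h A B X)).symm p =
      (Equiv.ofBijective _ (h A' B' X)).symm (u ≫ p.1, v ≫ p.2) := by
  rw [Equiv.eq_symm_apply, Equiv.ofBijective_apply, reassoc_of% hI.prodInl_comp_prod_map,
    reassoc_of% hI.prodInr_comp_prod_map]
  exact congrArg (fun q => (u ≫ q.1, v ≫ q.2)) ((Equiv.ofBijective _ (h A B X)).apply_symm_apply p)

noncomputable def tensorAdjunctionDiag : tensor C ⊣ Functor.diag C :=
  Adjunction.mkOfHomEquiv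
    { homEquiv P X := Equiv.ofBijective _ (h P.1 P.2 X)
      homEquiv_naturality_left_symm u p :=
        ((congrArg (· ≫ _) (tensor_map_eq_prod_map u)).trans
          (hI.prod_map_comp_ofBijective_symm h u.1 u.2 p)).symm
      homEquiv_naturality_right _ _ := Prod.ext (Category.assoc _ _ _).symm
        (Category.assoc _ _ _).symm }

end CategoryTheory.Limits.IsInitial

namespace CategoryTheory.Adjunction

variable {G : C ⥤ C × C} (adj : tensor C ⊣ G)

noncomputable def prodHomEquiv (A B X : C) :
    (A ⨯ B ⟶ X) ≃ (A ⟶ (G.obj X).1) × (B ⟶ (G.obj X).2) :=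
  adj.homEquiv (A, B) X

theorem prodHomEquiv_prod_map_comp {A B A' B' X : C} (u : A' ⟶ A) (v : B' ⟶ B)
    (g : A ⨯ B ⟶ X) :
    adj.prodHomEquiv A' B' X (prod.map u v ≫ g) =
      (u ≫ (adj.prodHomEquiv A B X g).1, v ≫ (adj.prodHomEquiv A B X g).2) := by
  have := adj.homEquiv_naturality_left ((u, v) : ((A', B') : C × C) ⟶ (A, B)) g
  rwa [tensor_map_eq_prod_map] at this

theorem prodHomEquiv_terminal_fst {B X : C} (g : (⊤_ C) ⨯ B ⟶ X) :
    (adj.prodHomEquiv (⊤_ C) B X g).1 = (adj.prodHomEquiv (⊤_ C) X X prod.snd).1 := by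
  have hg : prod.map (𝟙 _) ((Limits.prod.leftUnitor B).inv ≫ g) ≫
      (Limits.prod.leftUnitor X).hom = g := by
    rw [Limits.prod.leftUnitor_hom_naturality, Iso.hom_inv_id_assoc]
  rw [← hg, prodHomEquiv_prod_map_comp, Category.id_comp]
  rfl

theorem prodHomEquiv_terminal_snd {A X : C} (g : A ⨯ ⊤_ C ⟶ X) :
    (adj.prodHomEquiv A (⊤_ C) X g).2 = (adj.prodHomEquiv X (⊤_ C) X prod.fst).2 := by
  have hg : prod.map ((Limits.prod.rightUnitor A).inv ≫ g) (𝟙 _) ≫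
      (Limits.prod.rightUnitor X).hom = g := by
    rw [Limits.prod.rightUnitor_hom_naturality, Iso.hom_inv_id_assoc]
  rw [← hg, prodHomEquiv_prod_map_comp, Category.id_comp]
  rfl

noncomputable abbrev uniqueHomTerminalFst (X : C) : Unique (⊤_ C ⟶ (G.obj X).1) where
  default := (adj.prodHomEquiv (⊤_ C) X X prod.snd).1
  uniq k := by
    simpa using adj.prodHomEquiv_terminal_fst ((adj.prodHomEquiv _ _ X).symm (k, 𝟙 _))

noncomputable abbrev uniqueHomTerminalSnd (X : C) : Unique (⊤_ C ⟶ (G.obj X).2) where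
  default := (adj.prodHomEquiv X (⊤_ C) X prod.fst).2
  uniq k := by
    simpa using adj.prodHomEquiv_terminal_snd ((adj.prodHomEquiv _ _ X).symm (𝟙 _, k))

noncomputable def isInitialTerminal : IsInitial (⊤_ C) :=
  have (X : C) : Unique (⊤_ C ⟶ X) :=
    letI := adj.uniqueHomTerminalFst X
    letI := adj.uniqueHomTerminalSnd X
    (((Limits.prod.leftUnitor (⊤_ C)).symm.homCongr (Iso.refl X)).trans
      ((adj.prodHomEquiv _ _ X).trans (Equiv.prodUnique _ _))).unique
  IsInitial.ofUnique _

noncomputable def homEquivFst (A T : C) : (A ⟶ T) ≃ (A ⟶ (G.obj T).1) :=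
  letI := adj.uniqueHomTerminalSnd T
  ((Limits.prod.rightUnitor A).symm.homCongr (Iso.refl T)).trans
    ((adj.prodHomEquiv A _ T).trans (Equiv.prodUnique _ _))

noncomputable def homEquivSnd (B T : C) : (B ⟶ T) ≃ (B ⟶ (G.obj T).2) :=
  letI := adj.uniqueHomTerminalFst T
  ((Limits.prod.leftUnitor B).symm.homCongr (Iso.refl T)).trans
    ((adj.prodHomEquiv _ B T).trans (Equiv.uniqueProd _ _))

variable (hI : IsInitial (⊤_ C))

theorem homEquivFst_prodInl_comp {A B T : C} (m : A ⨯ B ⟶ T) :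
    adj.homEquivFst A T (hI.prodInl A B ≫ m) = (adj.prodHomEquiv A B T m).1 := by
  simp only [homEquivFst, Equiv.trans_apply, Iso.homCongr_apply, Equiv.prodUnique_apply,
    Iso.symm_inv, Iso.refl_hom, Category.comp_id, Limits.prod.rightUnitor_hom]
  rw [← Category.assoc, hI.fst_comp_prodInl, prodHomEquiv_prod_map_comp, Category.id_comp]

theorem homEquivSnd_prodInr_comp {A B T : C} (m : A ⨯ B ⟶ T) :
    adj.homEquivSnd B T (hI.prodInr A B ≫ m) = (adj.prodHomEquiv A B T m).2 := by
  simp only [homEquivSnd, Equiv.trans_apply, Iso.homCongr_apply, Equiv.uniqueProd_apply,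
    Iso.symm_inv, Iso.refl_hom, Category.comp_id, Limits.prod.leftUnitor_hom]
  rw [← Category.assoc, hI.snd_comp_prodInr, prodHomEquiv_prod_map_comp, Category.id_comp]

include adj in
theorem bijective_prodInl_prodInr (A B T : C) :
    Function.Bijective fun m : A ⨯ B ⟶ T => (hI.prodInl A B ≫ m, hI.prodInr A B ≫ m) := by
  have h : (adj.homEquivFst A T).prodCongr (adj.homEquivSnd B T) ∘
      (fun m : A ⨯ B ⟶ T => (hI.prodInl A B ≫ m, hI.prodInr A B ≫ m)) =
      adj.prodHomEquiv A B T :=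
    funext fun m => Prod.ext (adj.homEquivFst_prodInl_comp hI m)
      (adj.homEquivSnd_prodInr_comp hI m)
  exact (Function.Bijective.of_comp_iff' (Equiv.bijective _) _).mp (h ▸ Equiv.bijective _)

end CategoryTheory.Adjunction

end

/-- In a cartesian monoidal category, the product functor `C × C ⥤ C` admits a right
adjoint iff `C` has finite biproducts: the terminal object is initial, and for all `A, B`
the product `A ⨯ B`, equipped with the canonical coprojections, is a binary coproduct. -/
theorem prodFunctor_isLeftAdjoint_iff_biproducts {C : Type*} [Category C]
    [HasFiniteProducts C] :
    (MonoidalCategory.tensor C).IsLeftAdjoint ↔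
      ∃ hI : IsInitial (⊤_ C),
        ∀ A B : C, Nonempty (IsColimit (BinaryCofan.mk
          (prod.lift (𝟙 A) (terminal.from A ≫ hI.to B))
          (prod.lift (terminal.from B ≫ hI.to A) (𝟙 B)))) := by
  constructor
  · rintro ⟨G, ⟨adj⟩⟩
    exact ⟨adj.isInitialTerminal, fun A B => (BinaryCofan.nonempty_isColimit_iff_bijective _).mpr
      (adj.bijective_prodInl_prodInr adj.isInitialTerminal A B)⟩
  · rintro ⟨hI, hc⟩
    exact (hI.tensorAdjunctionDiag fun A B =>
      (BinaryCofan.nonempty_isColimit_iff_bijective _).mp (hc A B)).isLeftAdjoint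
end
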